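/- Let k ≥ 2, K ≥ k, Δ ≥ 1 and c > 0. Let g'_1, …, g'_{k−1} be real numbers with |g'_i| ≤ Δ, let λ_1, …, λ_k and ν_1, …, ν_k be integers, and set λ = Σ_{i=1}^{k−1} ⌊g'_i λ_i⌋ and ν = Σ_{i=1}^{k−1} ⌊g'_i ν_i⌋. Let G_1, …, G_{k−1} be independent real-valued random variables, each with density bounded above by c. If |λ − ν| > K, then P( λ_k + Σ_{i=1}^{k−1} ⌊G_i λ_i⌋ = ν_k + Σ_{i=1}^{k−1} ⌊G_i ν_i⌋ ) ≤ 2·K²·Δ·c / (|λ − ν| − K). -/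

import Mathlib

/-!
Since `⌊g a⌋ - ⌊g b⌋` is within `1` of `g (a - b)`, the gap `|λ - ν| > K ≥ k - 1` forces a
coordinate `i₀` with `|λ_{i₀} - ν_{i₀}| ≥ (|λ - ν| - K) / (ΔK)`. Alignment says that
`⌊G_{i₀} λ_{i₀}⌋ - ⌊G_{i₀} ν_{i₀}⌋` equals a quantity independent of `G_{i₀}`; for each value `w`
of it this confines `G_{i₀} (λ_{i₀} - ν_{i₀})` to `(w - 1, w + 1)`, an event of probability at
most `2c / |λ_{i₀} - ν_{i₀}|`.
-/

open MeasureTheory ProbabilityTheory Finset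

theorem abs_floor_sub_floor_sub_sub_lt (a b : ℝ) : |((⌊a⌋ : ℝ) - ⌊b⌋) - (a - b)| < 1 := by
  have := Int.floor_le a
  have := Int.lt_floor_add_one a
  have := Int.floor_le b
  have := Int.lt_floor_add_one b
  rw [abs_lt]
  constructor <;> linarith

theorem abs_floor_mul_sub_floor_mul_le (g a b : ℝ) :
    |(⌊g * a⌋ : ℝ) - ⌊g * b⌋| ≤ |g| * |a - b| + 1 := by
  rw [← abs_mul, mul_sub]
  linarith [abs_sub_abs_le_abs_sub ((⌊g * a⌋ : ℝ) - ⌊g * b⌋) (g * a - g * b),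
    abs_floor_sub_floor_sub_sub_lt (g * a) (g * b)]

theorem exists_sub_le_mul_abs_sub {ι : Type*} [Fintype ι] [Nonempty ι] {g : ι → ℝ} {Δ : ℝ}
    (hg : ∀ i, |g i| ≤ Δ) (a b : ι → ℤ) {N : ℕ} (hN : Fintype.card ι ≤ N) :
    ∃ j, ((|∑ i, ⌊g i * a i⌋ - ∑ i, ⌊g i * b i⌋| : ℤ) : ℝ) - N ≤ Δ * N * |(a j : ℝ) - b j| := by
  obtain ⟨j, -, hj⟩ := exists_max_image univ (fun i => |(a i : ℝ) - b i|) univ_nonempty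
  refine ⟨j, ?_⟩
  have hΔ : 0 ≤ Δ := (abs_nonneg _).trans (hg j)
  have hterm (i : ι) : |(⌊g i * a i⌋ : ℝ) - ⌊g i * b i⌋| ≤ Δ * |(a j : ℝ) - b j| + 1 := by
    refine (abs_floor_mul_sub_floor_mul_le _ _ _).trans ?_
    gcongr ?_ * ?_ + 1
    exacts [hg i, hj i (mem_univ i)]
  have hsum : ((|∑ i, ⌊g i * a i⌋ - ∑ i, ⌊g i * b i⌋| : ℤ) : ℝ)
      ≤ Fintype.card ι * (Δ * |(a j : ℝ) - b j| + 1) :=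
    calc ((|∑ i, ⌊g i * a i⌋ - ∑ i, ⌊g i * b i⌋| : ℤ) : ℝ)
        ≤ ∑ i, |(⌊g i * a i⌋ : ℝ) - ⌊g i * b i⌋| := by
          push_cast; rw [← sum_sub_distrib]; exact abs_sum_le_sum_abs _ _
      _ ≤ ∑ _i : ι, (Δ * |(a j : ℝ) - b j| + 1) := sum_le_sum fun i _ => hterm i
      _ = Fintype.card ι * (Δ * |(a j : ℝ) - b j| + 1) := by simp [mul_add]
  have hN' : (Fintype.card ι : ℝ) ≤ N := by exact_mod_cast hN
  nlinarith [mul_nonneg hΔ (abs_nonneg ((a j : ℝ) - b j))]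

theorem floor_mul_sub_floor_mul_eq_subset (a b w : ℤ) :
    {x : ℝ | ⌊x * a⌋ - ⌊x * b⌋ = w} ⊆ (· * ((a : ℝ) - b)) ⁻¹' Set.Ioo ((w : ℝ) - 1) (w + 1) := by
  intro x hx
  have hw : (⌊x * a⌋ : ℝ) - ⌊x * b⌋ = w := by exact_mod_cast hx
  have := abs_floor_sub_floor_sub_sub_lt (x * a) (x * b)
  rw [hw, ← mul_sub, abs_lt] at this
  simp only [Set.mem_preimage, Set.mem_Ioo]
  constructor <;> linarith

theorem measure_floor_mul_sub_floor_mul_eq_le {ν : Measure ℝ} {c : ℝ} (hc : 0 ≤ c)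
    (hν : ∀ s, MeasurableSet s → ν s ≤ ENNReal.ofReal c * volume s) {a b : ℤ} (hab : a ≠ b)
    (w : ℤ) : ν {x | ⌊x * a⌋ - ⌊x * b⌋ = w} ≤ ENNReal.ofReal (2 * c / |(a : ℝ) - b|) := by
  have hab' : (a : ℝ) - b ≠ 0 := sub_ne_zero.mpr (Int.cast_injective.ne hab)
  calc ν {x | ⌊x * a⌋ - ⌊x * b⌋ = w}
      ≤ ν ((· * ((a : ℝ) - b)) ⁻¹' Set.Ioo ((w : ℝ) - 1) (w + 1)) :=
        measure_mono (floor_mul_sub_floor_mul_eq_subset a b w)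
    _ ≤ ENNReal.ofReal c * volume ((· * ((a : ℝ) - b)) ⁻¹' Set.Ioo ((w : ℝ) - 1) (w + 1)) :=
        hν _ (measurableSet_Ioo.preimage (measurable_mul_const _))
    _ = ENNReal.ofReal (2 * c / |(a : ℝ) - b|) := by
        rw [Real.volume_preimage_mul_right hab', Real.volume_Ioo, abs_inv,
          ← ENNReal.ofReal_mul (inv_nonneg.mpr (abs_nonneg _)), ← ENNReal.ofReal_mul hc]
        congr 1
        ring

namespace ProbabilityTheory

variable {Ω β : Type*} [MeasurableSpace Ω] {μ : Measure Ω} [IsProbabilityMeasure μ]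

theorem IndepFun.measure_add_eq_le [MeasurableSpace β] [AddGroup β] [MeasurableAdd₂ β]
    [MeasurableSingletonClass β] {W Y : Ω → β} (hW : Measurable W) (hY : Measurable Y)
    (hWY : IndepFun W Y μ) {p : ENNReal} (hp : ∀ y, μ (Y ⁻¹' {y}) ≤ p) (t : β) :
    μ {ω | W ω + Y ω = t} ≤ p := by
  set A : Set (β × β) := (fun q => q.1 + q.2) ⁻¹' {t}
  have hA : MeasurableSet A := measurable_add (measurableSet_singleton t)
  have hslice (w : β) : Prod.mk w ⁻¹' A = {-w + t} := by
    ext y; simp [A, eq_neg_add_iff_add_eq]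
  change μ ((fun ω => (W ω, Y ω)) ⁻¹' A) ≤ p
  rw [← Measure.map_apply (hW.prodMk hY) hA,
    (indepFun_iff_map_prod_eq_prod_map_map hW.aemeasurable hY.aemeasurable).mp hWY,
    Measure.prod_apply hA]
  calc ∫⁻ w, μ.map Y (Prod.mk w ⁻¹' A) ∂μ.map W ≤ ∫⁻ _, p ∂μ.map W := by
        refine lintegral_mono fun w => ?_
        rw [hslice, Measure.map_apply hY (measurableSet_singleton _)]
        exact hp _
    _ = p := by
        rw [lintegral_const, Measure.map_apply hW MeasurableSet.univ, Set.preimage_univ,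
          measure_univ, mul_one]

theorem iIndepFun.measure_sum_eq_le {ι : Type*} [Fintype ι] [MeasurableSpace β] [AddCommGroup β]
    [MeasurableAdd₂ β] [MeasurableSingletonClass β] {Y : ι → Ω → β}
    (hY : ∀ i, Measurable (Y i)) (hindep : iIndepFun Y μ) (i : ι) {p : ENNReal}
    (hp : ∀ y, μ (Y i ⁻¹' {y}) ≤ p) (t : β) : μ {ω | ∑ j, Y j ω = t} ≤ p := by
  classical
  have hsplit : {ω | ∑ j, Y j ω = t} = {ω | (∑ j ∈ univ.erase i, Y j) ω + Y i ω = t} := by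
    simp only [Finset.sum_apply, sum_erase_add _ _ (mem_univ i)]
  rw [hsplit]
  refine (hindep.indepFun_finsetSum_of_notMem hY (notMem_erase i univ)).measure_add_eq_le
    ?_ (hY i) hp t
  rw [sum_fn]
  exact Finset.measurable_sum _ fun j _ => hY j

end ProbabilityTheory

theorem prob_image_alignment_received_general {Ω : Type*} [MeasurableSpace Ω]
    (μ : Measure Ω) [IsProbabilityMeasure μ]
    (k K : ℕ) (hk : 2 ≤ k) (hkK : k ≤ K)
    (Δ : ℝ) (c : ℝ) (hc : 0 < c)
    (g' : Fin (k - 1) → ℝ) (hg' : ∀ i, |g' i| ≤ Δ)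
    (lam nu : Fin (k - 1) → ℤ) (lamk nuk : ℤ)
    (G : Fin (k - 1) → Ω → ℝ) (hG : ∀ i, Measurable (G i))
    (hindep : iIndepFun G μ)
    (hdens : ∀ i, ∀ s : Set ℝ, MeasurableSet s →
      (μ.map (G i)) s ≤ ENNReal.ofReal c * volume s)
    (h : (K : ℤ) < |(∑ i, ⌊g' i * (lam i : ℝ)⌋) - (∑ i, ⌊g' i * (nu i : ℝ)⌋)|) :
    μ {ω | lamk + ∑ i, ⌊G i ω * (lam i : ℝ)⌋ = nuk + ∑ i, ⌊G i ω * (nu i : ℝ)⌋}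
      ≤ ENNReal.ofReal (2 * (K : ℝ) ^ 2 * Δ * c /
          (((|(∑ i, ⌊g' i * (lam i : ℝ)⌋) - (∑ i, ⌊g' i * (nu i : ℝ)⌋)| : ℤ) : ℝ)
            - (K : ℝ))) := by
  have : Nonempty (Fin (k - 1)) := ⟨⟨0, by omega⟩⟩
  obtain ⟨i₀, hi₀⟩ := exists_sub_le_mul_abs_sub hg' lam nu (by simp; omega : Fintype.card _ ≤ K)
  set D : ℝ := ((|(∑ i, ⌊g' i * (lam i : ℝ)⌋) - (∑ i, ⌊g' i * (nu i : ℝ)⌋)| : ℤ) : ℝ)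
  set m : ℝ := (lam i₀ : ℝ) - nu i₀
  have hΔ : 0 ≤ Δ := (abs_nonneg _).trans (hg' i₀)
  have hKD : (K : ℝ) < D := by rw [← Int.cast_natCast]; exact Int.cast_lt.mpr h
  have hm : 0 < |m| := pos_of_mul_pos_right (by linarith) (by positivity : 0 ≤ Δ * K)
  have hlam_ne_nu : lam i₀ ≠ nu i₀ := fun heq => by simp [m, heq] at hm
  set φ : Fin (k - 1) → ℝ → ℤ := fun j x => ⌊x * (lam j : ℝ)⌋ - ⌊x * (nu j : ℝ)⌋
  have hφ (j) : Measurable (φ j) := (measurable_mul_const _).floor.sub (measurable_mul_const _).floor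
  have hevent : {ω | lamk + ∑ i, ⌊G i ω * (lam i : ℝ)⌋ = nuk + ∑ i, ⌊G i ω * (nu i : ℝ)⌋}
      = {ω | ∑ j, (φ j ∘ G j) ω = nuk - lamk} := by
    ext ω
    simp only [Set.mem_ofPred_eq, Function.comp_apply, φ, sum_sub_distrib]
    omega
  rw [hevent]
  calc _ ≤ ENNReal.ofReal (2 * c / |m|) :=
        (hindep.comp φ hφ).measure_sum_eq_le (fun j => (hφ j).comp (hG j)) i₀
          (fun w => (Measure.le_map_apply (hG i₀).aemeasurable _).trans
            (measure_floor_mul_sub_floor_mul_eq_le hc.le (hdens i₀) hlam_ne_nu w)) _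
    _ ≤ _ := by
        refine ENNReal.ofReal_le_ofReal ((div_le_div_iff₀ hm (by linarith)).mpr ?_)
        have hK : (K : ℝ) ≤ K ^ 2 := by exact_mod_cast Nat.le_self_pow two_ne_zero K
        nlinarith [mul_le_mul_of_nonneg_right hK (by positivity : 0 ≤ 2 * c * Δ * |m|)]

/-- Per-channel-use probability of image alignment, in terms of the received-signal
realizations `λ, ν` of the previous user: if `|λ − ν| > K`, the probability that the images
align at user `k` is at most `2K²Δc/(|λ − ν| − K)`. -/
theorem prob_image_alignment_received {Ω : Type*} [MeasurableSpace Ω]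
    (μ : Measure Ω) [IsProbabilityMeasure μ]
    (k K : ℕ) (hk : 2 ≤ k) (hkK : k ≤ K)
    (Δ : ℝ) (hΔ : 1 ≤ Δ) (c : ℝ) (hc : 0 < c)
    (g' : Fin (k - 1) → ℝ) (hg' : ∀ i, |g' i| ≤ Δ)
    (lam nu : Fin (k - 1) → ℤ) (lamk nuk : ℤ)
    (G : Fin (k - 1) → Ω → ℝ) (hG : ∀ i, Measurable (G i))
    (hindep : iIndepFun G μ)
    (hdens : ∀ i, ∀ s : Set ℝ, MeasurableSet s →
      (μ.map (G i)) s ≤ ENNReal.ofReal c * volume s)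
    (h : (K : ℤ) < |(∑ i, ⌊g' i * (lam i : ℝ)⌋) - (∑ i, ⌊g' i * (nu i : ℝ)⌋)|) :
    μ {ω | lamk + ∑ i, ⌊G i ω * (lam i : ℝ)⌋ = nuk + ∑ i, ⌊G i ω * (nu i : ℝ)⌋}
      ≤ ENNReal.ofReal (2 * (K : ℝ) ^ 2 * Δ * c /
          (((|(∑ i, ⌊g' i * (lam i : ℝ)⌋) - (∑ i, ⌊g' i * (nu i : ℝ)⌋)| : ℤ) : ℝ)
            - (K : ℝ))) :=
  prob_image_alignment_received_general μ k K hk hkK Δ c hc g' hg' lam nu lamk nuk G hG hindep hdens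
    h
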